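/- Let 0 < ε₀, ε₁ ≤ 1/8, c₀ = 1/2 − ε₀, c₁ = 1/4 − ε₁, and β = 1/2 + √ε₁. Then there exists N₀ ∈ ℕ such that for every x ≥ β + √ε₁ and every finite composition Q of N₀ maps chosen arbitrarily from {f_{c₀}, f_{c₁}} (where f_c(z) = z² + c), one has Q(x) > 3. -/
import Mathlib


/-- Composition of `n` real quadratic maps `x ↦ x² + c (s k)` chosen by the template `s`. -/
def compSeq (c : Bool → ℝ) (s : ℕ → Bool) : ℕ → ℝ → ℝ
  | 0 => id
  | n + 1 => (fun x => x ^ 2 + c (s n)) ∘ compSeq c s n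

theorem stmt_12 (ε₀ ε₁ : ℝ) (h₀ : 0 < ε₀) (h₀' : ε₀ ≤ 1 / 8)
    (h₁ : 0 < ε₁) (h₁' : ε₁ ≤ 1 / 8)
    (c : Bool → ℝ) (hc0 : c false = 1 / 2 - ε₀) (hc1 : c true = 1 / 4 - ε₁) :
    ∃ N₀ : ℕ, ∀ x : ℝ, (1 / 2 + Real.sqrt ε₁) + Real.sqrt ε₁ ≤ x →
      ∀ s : ℕ → Bool, 3 < compSeq c s N₀ x := by
  set δ : ℝ := min (3 * ε₁) (1 / 8) with hδdef
  have hδpos : 0 < δ := lt_min (by linarith) (by norm_num)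
  refine ⟨⌈3 / δ⌉₊, ?_⟩
  intro x hx s
  have hsq : Real.sqrt ε₁ ^ 2 = ε₁ := Real.sq_sqrt h₁.le
  have hsnn : 0 ≤ Real.sqrt ε₁ := Real.sqrt_nonneg _
  have key : ∀ n, x + n * δ ≤ compSeq c s n x := by
    intro n
    induction n with
    | zero => simp [compSeq]
    | succ n ih =>
      have hy : (1 / 2 + Real.sqrt ε₁) + Real.sqrt ε₁ ≤ compSeq c s n x := by
        nlinarith [mul_nonneg (Nat.cast_nonneg (α := ℝ) n) hδpos.le]
      set y := compSeq c s n x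
      have hy2 : 2 * Real.sqrt ε₁ ≤ y - 1/2 := by linarith
      have hsq2 : (2 * Real.sqrt ε₁) ^ 2 ≤ (y - 1/2) ^ 2 := by
        apply sq_le_sq' <;> nlinarith
      have step : y + δ ≤ y ^ 2 + c (s n) := by
        cases hb : s n with
        | false =>
          rw [hc0]
          have : δ ≤ 1 / 8 := min_le_right _ _
          nlinarith [sq_nonneg (y - 1/2)]
        | true =>
          rw [hc1]
          have : δ ≤ 3 * ε₁ := min_le_left _ _
          nlinarith
      have : compSeq c s (n + 1) x = y ^ 2 + c (s n) := rfl
      rw [this]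
      push_cast
      nlinarith
  have hN := key ⌈3 / δ⌉₊
  have h3 : 3 / δ ≤ (⌈3 / δ⌉₊ : ℝ) := Nat.le_ceil _
  have : 3 ≤ (⌈3 / δ⌉₊ : ℝ) * δ := by
    rw [div_le_iff₀ hδpos] at h3; linarith
  nlinarith
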